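/- arXiv:1204.2980 — 3 statements merged into one kernel-verified Lean document; each statement's English description precedes it below -/
import Mathlib

section
/- Let X_0,...,X_n and Y_0,...,Y_n be random variables on a common probability space with values in Polish spaces. If the regular conditional distribution of Y^n given X^n factorizes causally, i.e. P_{Y^n|X^n}(dy^n|x^n) = ⊗_{i=0}^n P_{Y_i|Y^{i-1},X^i}(dy_i|y^{i-1},x^i) for P_{X^n}-almost all x^n, then for each i = 0,1,...,n-1 the Markov chain Y_i ↔ (X^i, Y^{i-1}) ↔ (X_{i+1}, X_{i+2}, ..., X_n) holds, i.e. Y_i is conditionally independent of (X_{i+1},...,X_n) given (X^i, Y^{i-1}). -/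
/-!
Integrating out the coordinates after `i`, the causal product shows that `(X^n, Y^{i-1}, Y_i)` is
distributed as `P_{X^n}(dx) ⊗ causalProd_i(x^{i-1})(dy^{i-1}) ⊗ κ_i(y^{i-1}, x^i)(dy_i)`.
Hence the conditional law of `Y_i` given `(Y^{i-1}, X^i)` together with any function of `X^n`,
in particular `(X_{i+1}, …, X_n)`, is still `κ_i(Y^{i-1}, X^i)`; this is the Markov chain.
-/

open MeasureTheory ProbabilityTheory
open scoped ENNReal

/-- The causal `(m)`-fold product measure on `Π j : Fin m, 𝒴 j` built from the stage
conditional kernels `κ i` of `Y_i` given `(Y^{i-1}, X^i)`, evaluated along the source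
sequence `x`.  This is `⊗_{i=0}^{m-1} P_{Y_i | Y^{i-1}, X^i}(dy_i | y^{i-1}, x^i)`. -/
noncomputable def causalProd {𝒳 𝒴 : ℕ → Type*} [∀ i, MeasurableSpace (𝒳 i)]
    [∀ i, MeasurableSpace (𝒴 i)]
    (κ : (i : ℕ) → Kernel ((Π j : Fin i, 𝒴 j) × (Π j : Fin (i + 1), 𝒳 j)) (𝒴 i)) :
    (m : ℕ) → (Π j : Fin m, 𝒳 j) → Measure (Π j : Fin m, 𝒴 j)
  | 0, _ => Measure.dirac (fun j => j.elim0)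
  | (m + 1), x =>
      (causalProd κ m (fun j => x j.castSucc)).bind
        (fun y => (κ m (y, x)).map (fun z => (Fin.snoc y z : Π j : Fin (m + 1), 𝒴 j)))

theorem measurable_fin_snoc {β : ℕ → Type*} [∀ i, MeasurableSpace (β i)] {m : ℕ} :
    Measurable (fun p : (Π j : Fin m, β j) × β m =>
      (Fin.snoc p.1 p.2 : Π j : Fin (m + 1), β j)) := by
  refine measurable_pi_lambda _ fun j => ?_
  induction j using Fin.lastCases with
  | last =>
    simp only [Fin.snoc_last]
    exact measurable_snd
  | cast j =>
    simp only [Fin.snoc_castSucc]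
    exact (measurable_pi_apply j).comp measurable_fst

namespace causalProd

variable {𝒳 𝒴 : ℕ → Type*} [∀ i, MeasurableSpace (𝒳 i)] [∀ i, MeasurableSpace (𝒴 i)]
  {κ : (i : ℕ) → Kernel ((Π j : Fin i, 𝒴 j) × (Π j : Fin (i + 1), 𝒳 j)) (𝒴 i)}

noncomputable abbrev stageKernel
    (κ : (i : ℕ) → Kernel ((Π j : Fin i, 𝒴 j) × (Π j : Fin (i + 1), 𝒳 j)) (𝒴 i))
    (m : ℕ) (x : Π j : Fin (m + 1), 𝒳 j) : Kernel (Π j : Fin m, 𝒴 j) (𝒴 m) :=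
  (κ m).comap (fun y => (y, x)) (measurable_id.prodMk measurable_const)

theorem succ_eq_comp [∀ i, IsSFiniteKernel (κ i)] (m : ℕ) (x : Π j : Fin (m + 1), 𝒳 j) :
    causalProd κ (m + 1) x = (Kernel.id ×ₖ stageKernel κ m x).map (fun p => Fin.snoc p.1 p.2)
      ∘ₘ causalProd κ m (fun j => x j.castSucc) := by
  rw [causalProd]
  congr 1
  funext y
  rw [Kernel.map_apply _ measurable_fin_snoc, Kernel.prod_apply, Kernel.id_apply,
    Measure.dirac_prod, Measure.map_map measurable_fin_snoc measurable_prodMk_left,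
    Kernel.comap_apply]
  rfl

variable [∀ i, IsMarkovKernel (κ i)]

instance isProbabilityMeasure :
    ∀ (m : ℕ) (x : Π j : Fin m, 𝒳 j), IsProbabilityMeasure (causalProd κ m x)
  | 0, _ => inferInstanceAs (IsProbabilityMeasure (Measure.dirac _))
  | m + 1, x => by
    have := isProbabilityMeasure m (fun j => x j.castSucc)
    have := Kernel.IsMarkovKernel.map (Kernel.id ×ₖ stageKernel κ m x) measurable_fin_snoc
    rw [succ_eq_comp]
    infer_instance

theorem succ_eq_map_compProd (m : ℕ) (x : Π j : Fin (m + 1), 𝒳 j) :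
    causalProd κ (m + 1) x = (causalProd κ m (fun j => x j.castSucc) ⊗ₘ stageKernel κ m x).map
      (fun p => Fin.snoc p.1 p.2) := by
  rw [succ_eq_comp, Measure.compProd_eq_comp_prod]
  exact (Measure.map_comp _ _ measurable_fin_snoc).symm

theorem map_castLE {m M : ℕ} (h : m ≤ M) (x : Π j : Fin M, 𝒳 j) :
    (causalProd κ M x).map (fun y (j : Fin m) => y (Fin.castLE h j))
      = causalProd κ m (fun j => x (Fin.castLE h j)) := by
  induction M, h using Nat.le_induction with
  | base => exact Measure.map_id
  | succ M hmM ih =>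
    have h : m ≤ M + 1 := hmM.trans M.le_succ
    have hr : ∀ {k} (h : m ≤ k), Measurable (fun (y : Π j : Fin k, 𝒴 j) (j : Fin m) =>
        y (Fin.castLE h j)) := fun _ => measurable_pi_lambda _ fun j => measurable_pi_apply _
    have hsnoc : (fun (y : Π j : Fin (M + 1), 𝒴 j) (j : Fin m) => y (Fin.castLE h j)) ∘
          (fun p : (Π j : Fin M, 𝒴 j) × 𝒴 M => (Fin.snoc p.1 p.2 : Π j : Fin (M + 1), 𝒴 j))
        = (fun (y : Π j : Fin M, 𝒴 j) (j : Fin m) => y (Fin.castLE hmM j)) ∘ Prod.fst :=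
      funext fun p => funext fun j =>
        Fin.snoc_castSucc (α := fun j : Fin (M + 1) => 𝒴 j) p.2 p.1 (Fin.castLE hmM j)
    rw [succ_eq_map_compProd, Measure.map_map (hr h) measurable_fin_snoc, hsnoc,
      ← Measure.map_map (hr hmM) measurable_fst]
    exact (congrArg _ (Measure.fst_compProd _ _)).trans (ih _)

theorem lintegral_castLE_succ {m M : ℕ} (h : m + 1 ≤ M) (x : Π j : Fin M, 𝒳 j)
    {f : (Π j : Fin m, 𝒴 j) × 𝒴 m → ℝ≥0∞} (hf : Measurable f) :
    ∫⁻ y, f (fun j => y (Fin.castLE (Nat.le_of_succ_le h) j), y ⟨m, h⟩) ∂causalProd κ M x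
      = ∫⁻ y, ∫⁻ z, f (y, z) ∂κ m (y, fun j => x (Fin.castLE h j))
          ∂causalProd κ m (fun j => x (Fin.castLE (Nat.le_of_succ_le h) j)) := by
  set split : (Π j : Fin (m + 1), 𝒴 j) → (Π j : Fin m, 𝒴 j) × 𝒴 m :=
    fun y => (fun j => y j.castSucc, y (Fin.last m))
  have hsplit : Measurable split :=
    (measurable_pi_lambda _ fun j => measurable_pi_apply _).prodMk (measurable_pi_apply _)
  have hrestrict :
      Measurable (fun (y : Π j : Fin M, 𝒴 j) (j : Fin (m + 1)) => y (Fin.castLE h j)) :=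
    measurable_pi_lambda _ fun j => measurable_pi_apply _
  have hsplit_snoc : ∀ p : (Π j : Fin m, 𝒴 j) × 𝒴 m, split (Fin.snoc p.1 p.2) = p := by
    intro p
    simp only [split, Fin.snoc_castSucc, Fin.snoc_last]
  calc ∫⁻ y, f (fun j => y (Fin.castLE (Nat.le_of_succ_le h) j), y ⟨m, h⟩) ∂causalProd κ M x
      = ∫⁻ y, f (split y)
          ∂(causalProd κ M x).map (fun y (j : Fin (m + 1)) => y (Fin.castLE h j)) :=
        (lintegral_map (hf.comp hsplit) hrestrict).symm
    _ = ∫⁻ p, f (split (Fin.snoc p.1 p.2))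
          ∂(causalProd κ m (fun j => x (Fin.castLE (Nat.le_of_succ_le h) j))
            ⊗ₘ stageKernel κ m (fun j => x (Fin.castLE h j))) := by
        rw [map_castLE, succ_eq_map_compProd]
        exact lintegral_map (hf.comp hsplit) measurable_fin_snoc
    _ = _ := by
        simp only [hsplit_snoc]
        exact Measure.lintegral_compProd hf

end causalProd

section CondDistrib

variable {Ω : Type*} [MeasurableSpace Ω] {μ : Measure Ω} [IsFiniteMeasure μ]
  {𝒳 𝒴 : ℕ → Type*} [∀ i, MeasurableSpace (𝒳 i)] [∀ i, MeasurableSpace (𝒴 i)]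
  [∀ i, StandardBorelSpace (𝒴 i)] [∀ i, Nonempty (𝒴 i)]
  {κ : (i : ℕ) → Kernel ((Π j : Fin i, 𝒴 j) × (Π j : Fin (i + 1), 𝒳 j)) (𝒴 i)}
  [∀ i, IsMarkovKernel (κ i)]
  {M m : ℕ} {V : Ω → Π j : Fin M, 𝒳 j} {U : Ω → Π j : Fin M, 𝒴 j}

theorem lintegral_eq_of_condDistrib_eq_causalProd (h : m + 1 ≤ M) (hV : Measurable V)
    (hU : Measurable U) (hfact : ∀ᵐ x ∂μ.map V, condDistrib U V μ x = causalProd κ M x)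
    {f : (Π j : Fin M, 𝒳 j) × (Π j : Fin m, 𝒴 j) × 𝒴 m → ℝ≥0∞} (hf : Measurable f) :
    ∫⁻ ω, f (V ω, fun j => U ω (Fin.castLE (Nat.le_of_succ_le h) j), U ω ⟨m, h⟩) ∂μ
      = ∫⁻ x, ∫⁻ y, ∫⁻ z, f (x, y, z) ∂κ m (y, fun j => x (Fin.castLE h j))
          ∂causalProd κ m (fun j => x (Fin.castLE (Nat.le_of_succ_le h) j)) ∂μ.map V := by
  set F : (Π j : Fin M, 𝒳 j) × (Π j : Fin M, 𝒴 j) → ℝ≥0∞ :=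
    fun p => f (p.1, fun j => p.2 (Fin.castLE (Nat.le_of_succ_le h) j), p.2 ⟨m, h⟩)
  have hF : Measurable F := by fun_prop
  calc ∫⁻ ω, F (V ω, U ω) ∂μ
      = ∫⁻ x, ∫⁻ y, F (x, y) ∂condDistrib U V μ x ∂μ.map V := by
        rw [← lintegral_map hF (hV.prodMk hU), ← compProd_map_condDistrib hU.aemeasurable,
          Measure.lintegral_compProd hF]
    _ = _ := lintegral_congr_ae <| hfact.mono fun x hx => by
        dsimp only
        rw [hx]
        exact causalProd.lintegral_castLE_succ h x (hf.comp measurable_prodMk_left)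

theorem condDistrib_ae_eq_prodMkRight_of_condDistrib_eq_causalProd {β : Type*}
    [MeasurableSpace β] (h : m + 1 ≤ M) (hV : Measurable V) (hU : Measurable U)
    (hfact : ∀ᵐ x ∂μ.map V, condDistrib U V μ x = causalProd κ M x)
    {φ : (Π j : Fin M, 𝒳 j) → β} (hφ : Measurable φ) :
    condDistrib (fun ω => U ω ⟨m, h⟩)
        (fun ω => (((fun j : Fin m => U ω (Fin.castLE (Nat.le_of_succ_le h) j)),
          fun j : Fin (m + 1) => V ω (Fin.castLE h j)), φ (V ω))) μ
      =ᵐ[μ.map (fun ω => (((fun j : Fin m => U ω (Fin.castLE (Nat.le_of_succ_le h) j)),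
          fun j : Fin (m + 1) => V ω (Fin.castLE h j)), φ (V ω)))]
        (κ m).prodMkRight β := by
  set C := fun ω => (((fun j : Fin m => U ω (Fin.castLE (Nat.le_of_succ_le h) j)),
          fun j : Fin (m + 1) => V ω (Fin.castLE h j)), φ (V ω))
  have hC : Measurable C := by fun_prop
  have hUm : Measurable (fun ω => U ω ⟨m, h⟩) := by fun_prop
  rw [condDistrib_ae_eq_iff_measure_eq_compProd _ hUm.aemeasurable]
  refine Measure.ext_of_lintegral _ fun F hF => ?_
  set G : (Π j : Fin M, 𝒳 j) × (Π j : Fin m, 𝒴 j) →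
      ((Π j : Fin m, 𝒴 j) × (Π j : Fin (m + 1), 𝒳 j)) × β :=
    fun q => ((q.2, fun j => q.1 (Fin.castLE h j)), φ q.1)
  have hFκ := hF.lintegral_kernel_prod_right' (κ := (κ m).prodMkRight β)
  have hLHS := lintegral_eq_of_condDistrib_eq_causalProd h hV hU hfact
    (f := fun q => F (G (q.1, q.2.1), q.2.2)) (by fun_prop)
  have hRHS := lintegral_eq_of_condDistrib_eq_causalProd h hV hU hfact
    (f := fun q => ∫⁻ z, F (G (q.1, q.2.1), z) ∂(κ m).prodMkRight β (G (q.1, q.2.1)))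
    (hFκ.comp (by fun_prop))
  simp only [lintegral_const, measure_univ, mul_one] at hRHS
  calc ∫⁻ q, F q ∂μ.map (fun ω => (C ω, U ω ⟨m, h⟩))
      = ∫⁻ ω, F (C ω, U ω ⟨m, h⟩) ∂μ := lintegral_map hF (hC.prodMk hUm)
    _ = ∫⁻ ω, ∫⁻ z, F (C ω, z) ∂(κ m).prodMkRight β (C ω) ∂μ := hLHS.trans hRHS.symm
    _ = ∫⁻ q, F q ∂(μ.map C ⊗ₘ (κ m).prodMkRight β) :=
      (lintegral_map hFκ hC).symm.trans (Measure.lintegral_compProd hF).symm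

end CondDistrib

/-- If the regular conditional distribution of `Y^n` given `X^n` factorizes
causally, i.e. `P_{Y^n|X^n}(dy^n|x^n) = ⊗_{i=0}^n P_{Y_i|Y^{i-1},X^i}(dy_i|y^{i-1},x^i)`
for `P_{X^n}`-almost all `x^n`, then for each `i < n`, `Y_i` is conditionally independent of
`(X_{i+1}, …, X_n)` given `(X^i, Y^{i-1})`. -/
theorem stmt0
    {Ω : Type*} [MeasurableSpace Ω] [StandardBorelSpace Ω] [Nonempty Ω]
    (μ : Measure Ω) [IsProbabilityMeasure μ]
    {𝒳 𝒴 : ℕ → Type*}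
    [∀ i, MeasurableSpace (𝒳 i)] [∀ i, TopologicalSpace (𝒳 i)]
    [∀ i, PolishSpace (𝒳 i)] [∀ i, BorelSpace (𝒳 i)]
    [∀ i, MeasurableSpace (𝒴 i)] [∀ i, TopologicalSpace (𝒴 i)]
    [∀ i, PolishSpace (𝒴 i)] [∀ i, BorelSpace (𝒴 i)] [∀ i, Nonempty (𝒴 i)]
    (n : ℕ) (X : (i : ℕ) → Ω → 𝒳 i) (Y : (i : ℕ) → Ω → 𝒴 i)
    (hX : ∀ i, Measurable (X i)) (hY : ∀ i, Measurable (Y i))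
    -- causal factorization of the regular conditional distribution of `Y^n` given `X^n`:
    (hfact : ∀ᵐ x ∂(μ.map (fun ω (j : Fin (n + 1)) => X j ω)),
      condDistrib (fun ω (j : Fin (n + 1)) => Y j ω) (fun ω (j : Fin (n + 1)) => X j ω) μ x
        = causalProd
            (fun i => condDistrib (Y i)
              (fun ω => ((fun j : Fin i => Y j ω), (fun j : Fin (i + 1) => X j ω))) μ)
            (n + 1) x) :
    -- conclusion: `Y_i ↔ (X^i, Y^{i-1}) ↔ (X_{i+1}, …, X_n)` for every `i < n`
    ∀ i < n,
      CondIndepFun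
        (MeasurableSpace.comap
          (fun ω => ((fun j : Fin i => Y j ω), (fun j : Fin (i + 1) => X j ω))) inferInstance)
        (((measurable_pi_lambda _ fun j : Fin i => hY j).prodMk
          (measurable_pi_lambda _ fun j : Fin (i + 1) => hX j)).comap_le)
        (Y i) (fun ω (j : Fin (n - i)) => X (i + 1 + j) ω) μ := by
  intro i hi
  have : ∀ k, Nonempty (𝒳 k) := fun k => ⟨X k (Classical.arbitrary Ω)⟩
  have hfuture : Measurable (fun ω (j : Fin (n - i)) => X (i + 1 + j) ω) :=
    measurable_pi_lambda _ fun j => hX _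
  have hpast : Measurable (fun ω => ((fun j : Fin i => Y j ω), (fun j : Fin (i + 1) => X j ω))) :=
    (measurable_pi_lambda _ fun j : Fin i => hY j).prodMk
      (measurable_pi_lambda _ fun j : Fin (i + 1) => hX j)
  refine ((condIndepFun_iff_condDistrib_prod_ae_eq_prodMkRight (hY i) hfuture hpast).mpr ?_).symm
  exact condDistrib_ae_eq_prodMkRight_of_condDistrib_eq_causalProd (show i + 1 ≤ n + 1 by omega)
    (measurable_pi_lambda _ fun j => hX j) (measurable_pi_lambda _ fun j => hY j) hfact
    (φ := fun x (j : Fin (n - i)) => x ⟨i + 1 + j, by omega⟩) (by fun_prop)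
end

section
/- Let X_0,...,X_n and Y_0,...,Y_n be random variables on a common probability space with values in Polish spaces. If for each i = 0,1,...,n-1 the Markov chain Y_i ↔ (X^i, Y^{i-1}) ↔ (X_{i+1},...,X_n) holds (Y_i conditionally independent of (X_{i+1},...,X_n) given (X^i, Y^{i-1})), then for each i = 0,1,...,n-1 the Markov chain Y^i ↔ X^i ↔ X_{i+1} holds, i.e. Y^i = (Y_0,...,Y_i) is conditionally independent of X_{i+1} given X^i. -/
/-
Conditional independence of σ-algebras obeys the semi-graphoid rules of weak union and
contraction; both follow from the characterisation `m₁ ⟂ m₂ | m'` iff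
`E[1_A | m' ⊔ m₂] = E[1_A | m']` for every `A ∈ m₁`, the forward direction by a π-λ argument on
the π-system of intersections `C ∩ B`, `C ∈ m'`, `B ∈ m₂`.
With `G_i = σ(X^i)`, `H_i = σ(Y^{i-1})` and `F_i = σ(X_{i+1}, …, X_n)`, induction on `i` gives
`H_i ⟂ F_i | G_i`: contraction with the hypothesis `Y_i ⟂ F_i | (G_i, H_i)` yields
`H_{i+1} ⟂ F_i | G_i`, and weak union moves `X_{i+1}` from `F_i` into the conditioning,
giving `H_{i+1} ⟂ F_{i+1} | G_{i+1}`. Restricting `F_i` to `σ(X_{i+1})` gives the theorem.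
-/

open MeasureTheory ProbabilityTheory

namespace MeasurableSpace

variable {Ω : Type*}

theorem isPiSystem_image2_inter (m₁ m₂ : MeasurableSpace Ω) :
    IsPiSystem (Set.image2 (· ∩ ·) {s | MeasurableSet[m₁] s} {s | MeasurableSet[m₂] s}) := by
  rintro _ ⟨a₁, ha₁, a₂, ha₂, rfl⟩ _ ⟨b₁, hb₁, b₂, hb₂, rfl⟩ -
  exact ⟨a₁ ∩ b₁, ha₁.inter hb₁, a₂ ∩ b₂, ha₂.inter hb₂, Set.inter_inter_inter_comm ..⟩

theorem generateFrom_image2_inter (m₁ m₂ : MeasurableSpace Ω) :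
    generateFrom (Set.image2 (· ∩ ·) {s | MeasurableSet[m₁] s} {s | MeasurableSet[m₂] s}) =
      m₁ ⊔ m₂ := by
  refine le_antisymm (generateFrom_le ?_) (sup_le (fun s hs => ?_) (fun s hs => ?_))
  · rintro _ ⟨a, ha, b, hb, rfl⟩
    exact (le_sup_left (b := m₂) a ha).inter (le_sup_right (a := m₁) b hb)
  · exact measurableSet_generateFrom ⟨s, hs, .univ, .univ, Set.inter_univ s⟩
  · exact measurableSet_generateFrom ⟨.univ, .univ, s, hs, Set.univ_inter s⟩

theorem comap_pi_le_iff {ι : Type*} {β : ι → Type*} [∀ i, MeasurableSpace (β i)]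
    {m : MeasurableSpace Ω} (f : (i : ι) → Ω → β i) :
    pi.comap (fun ω i => f i ω) ≤ m ↔ ∀ i, MeasurableSpace.comap (f i) inferInstance ≤ m := by
  simp_rw [← measurable_iff_comap_le, measurable_pi_iff]

theorem comap_le_comap_pi_of_eq {κ ι : Type*} {β : κ → Type*} [∀ k, MeasurableSpace (β k)]
    (Z : (k : κ) → Ω → β k) (e : ι → κ) {k : κ} (i : ι) (h : e i = k) :
    MeasurableSpace.comap (Z k) inferInstance ≤ pi.comap (fun ω i => Z (e i) ω) := by
  subst h
  exact comap_le_comap_pi (g := fun i => Z (e i)) i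

section FinTuple

variable {β : ℕ → Type*} [∀ i, MeasurableSpace (β i)] (Z : (i : ℕ) → Ω → β i)

theorem comap_fin_zero_eq_bot : pi.comap (fun ω (j : Fin 0) => Z j ω) = ⊥ :=
  le_bot_iff.1 (@measurable_of_subsingleton_codomain _ _ ⊥ _ _ _).comap_le

theorem comap_fin_le_comap_fin_succ (p : ℕ) :
    pi.comap (fun ω (j : Fin p) => Z j ω) ≤ pi.comap (fun ω (j : Fin (p + 1)) => Z j ω) :=
  (comap_pi_le_iff _).2 fun j => comap_le_comap_pi_of_eq Z _ (Fin.castSucc j) rfl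

theorem comap_fin_succ_le (p : ℕ) :
    pi.comap (fun ω (j : Fin (p + 1)) => Z j ω) ≤
      pi.comap (fun ω (j : Fin p) => Z j ω) ⊔ MeasurableSpace.comap (Z p) inferInstance := by
  refine (comap_pi_le_iff _).2 fun j => ?_
  induction j using Fin.lastCases with
  | last => exact le_sup_right
  | cast j => exact (comap_le_comap_pi_of_eq Z (fun j : Fin p => (j : ℕ)) j rfl).trans le_sup_left

theorem comap_le_comap_fin_shift {p l : ℕ} (hl : 0 < l) :
    MeasurableSpace.comap (Z p) inferInstance ≤ pi.comap (fun ω (j : Fin l) => Z (p + j) ω) :=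
  comap_le_comap_pi_of_eq Z _ ⟨0, hl⟩ rfl

theorem comap_fin_succ_sup_comap_fin_shift_le {p l l' : ℕ} (hl : l' + 1 ≤ l) :
    pi.comap (fun ω (j : Fin (p + 1)) => Z j ω) ⊔ pi.comap (fun ω (j : Fin l') => Z (p + 1 + j) ω)
      ≤ pi.comap (fun ω (j : Fin p) => Z j ω) ⊔ pi.comap (fun ω (j : Fin l) => Z (p + j) ω) := by
  refine sup_le ((comap_fin_succ_le Z p).trans (sup_le_sup_left ?_ _))
    ((comap_pi_le_iff _).2 fun j => ?_)
  · exact comap_le_comap_fin_shift Z (by omega)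
  · refine (comap_le_comap_pi_of_eq Z (fun j : Fin l => p + j) ⟨j + 1, by omega⟩ ?_).trans
      le_sup_right
    dsimp only
    omega

end FinTuple

end MeasurableSpace

theorem Set.indicator_one_mul_eq_indicator {α M : Type*} [MulZeroOneClass M] (t : Set α)
    (f : α → M) : t.indicator (fun _ => (1 : M)) * f = t.indicator f := by
  ext x
  by_cases hx : x ∈ t <;> simp [hx]

theorem MeasureTheory.Integrable.indicator_one_mul {α R : Type*} [NormedRing R]
    {mα : MeasurableSpace α} {μ : Measure α} {f : α → R} (hf : Integrable f μ) {t : Set α}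
    (ht : MeasurableSet t) : Integrable (t.indicator (fun _ => (1 : R)) * f) μ := by
  rw [Set.indicator_one_mul_eq_indicator]
  exact hf.indicator ht

theorem MeasureTheory.setIntegral_eq_of_isPiSystem {α : Type*} {m m₀ : MeasurableSpace α}
    {μ : Measure[m₀] α} (hm : m ≤ m₀) {S : Set (Set α)} (h_eq : m = MeasurableSpace.generateFrom S)
    (h_pi : IsPiSystem S) {f g : α → ℝ} (hf : Integrable f μ) (hg : Integrable g μ)
    (h_basic : ∀ t ∈ S, ∫ x in t, f x ∂μ = ∫ x in t, g x ∂μ)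
    (h_univ : ∫ x, f x ∂μ = ∫ x, g x ∂μ) {t : Set α} (ht : MeasurableSet[m] t) :
    ∫ x in t, f x ∂μ = ∫ x in t, g x ∂μ := by
  induction t, ht using MeasurableSpace.induction_on_inter h_eq h_pi with
  | empty => simp
  | basic t ht => exact h_basic t ht
  | compl t ht ih =>
    have hf' := integral_add_compl (hm t ht) hf
    have hg' := integral_add_compl (hm t ht) hg
    linarith
  | iUnion t hdisj ht ih =>
    rw [integral_iUnion (fun i => hm _ (ht i)) hdisj hf.integrableOn,
      integral_iUnion (fun i => hm _ (ht i)) hdisj hg.integrableOn]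
    exact tsum_congr ih

namespace ProbabilityTheory

variable {Ω : Type*} {m' m'' m₁ m₂ m₃ : MeasurableSpace Ω} {mΩ : MeasurableSpace Ω}
  [StandardBorelSpace Ω] {μ : Measure Ω} [IsFiniteMeasure μ]

theorem CondIndep.condExp_indicator_sup_ae_eq {hm' : m' ≤ mΩ} (hm₁ : m₁ ≤ mΩ) (hm₂ : m₂ ≤ mΩ)
    (h : CondIndep m' m₁ m₂ hm' μ) {a : Set Ω} (ha : MeasurableSet[m₁] a) :
    μ⟦a | m' ⊔ m₂⟧ =ᵐ[μ] μ⟦a | m'⟧ := by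
  rw [condIndep_iff m' m₁ m₂ hm' hm₁ hm₂] at h
  have hsup : m' ⊔ m₂ ≤ mΩ := sup_le hm' hm₂
  have hind : ∀ {t}, MeasurableSet t → Integrable (t.indicator fun _ => (1 : ℝ)) μ :=
    fun ht => (integrable_const 1).indicator ht
  refine (ae_eq_condExp_of_forall_setIntegral_eq hsup (hind (hm₁ a ha))
    (fun s _ _ => integrable_condExp.integrableOn) (fun s hs _ => ?_)
    ((stronglyMeasurable_condExp (m := m') (μ := μ)).mono
      (le_sup_left : m' ≤ m' ⊔ m₂)).aestronglyMeasurable).symm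
  refine setIntegral_eq_of_isPiSystem hsup (MeasurableSpace.generateFrom_image2_inter m' m₂).symm
    (MeasurableSpace.isPiSystem_image2_inter m' m₂) integrable_condExp (hind (hm₁ a ha)) ?_
    (integral_condExp hm') hs
  rintro _ ⟨c, hc, b, hb, rfl⟩
  have hbΩ := hm₂ b hb
  have hb_int := integrable_condExp.indicator_one_mul (μ := μ) (f := μ⟦a | m'⟧) hbΩ
  calc ∫ x in c ∩ b, (μ⟦a | m'⟧) x ∂μ
      = ∫ x in c, (b.indicator (fun _ => (1 : ℝ)) * μ⟦a | m'⟧) x ∂μ := by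
        rw [Set.indicator_one_mul_eq_indicator, setIntegral_indicator hbΩ]
    _ = ∫ x in c, μ[b.indicator (fun _ => (1 : ℝ)) * (μ⟦a | m'⟧) | m'] x ∂μ :=
        (setIntegral_condExp hm' hb_int hc).symm
    _ = ∫ x in c, (μ⟦a ∩ b | m'⟧) x ∂μ := by
        refine setIntegral_congr_ae (hm' c hc) ?_
        filter_upwards [condExp_mul_of_stronglyMeasurable_right stronglyMeasurable_condExp
          hb_int (hind hbΩ), h a b ha hb] with x hx hx' _
        rw [hx, hx', Pi.mul_apply, Pi.mul_apply, mul_comm]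
    _ = ∫ x in c, ((a ∩ b).indicator fun _ => (1 : ℝ)) x ∂μ :=
        setIntegral_condExp hm' (hind ((hm₁ a ha).inter hbΩ)) hc
    _ = ∫ x in c ∩ b, a.indicator (fun _ => (1 : ℝ)) x ∂μ := by
        rw [← setIntegral_indicator hbΩ, Set.indicator_indicator, Set.inter_comm]

theorem condIndep_of_condExp_indicator_sup_ae_eq (hm' : m' ≤ mΩ) (hm₁ : m₁ ≤ mΩ)
    (hm₂ : m₂ ≤ mΩ) (h : ∀ t, MeasurableSet[m₁] t → μ⟦t | m' ⊔ m₂⟧ =ᵐ[μ] μ⟦t | m'⟧) :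
    CondIndep m' m₁ m₂ hm' μ := by
  rw [condIndep_iff m' m₁ m₂ hm' hm₁ hm₂]
  intro a b ha hb
  have hbΩ := hm₂ b hb
  have ha_int : Integrable (a.indicator fun _ => (1 : ℝ)) μ :=
    (integrable_const 1).indicator (hm₁ a ha)
  have hb_sm : StronglyMeasurable[m' ⊔ m₂] (b.indicator fun _ => (1 : ℝ)) :=
    stronglyMeasurable_const.indicator (le_sup_right (a := m') b hb)
  calc μ⟦a ∩ b | m'⟧
      = μ[b.indicator (fun _ => (1 : ℝ)) * a.indicator (fun _ => (1 : ℝ)) | m'] := by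
        rw [Set.indicator_one_mul_eq_indicator, Set.indicator_indicator, Set.inter_comm]
    _ =ᵐ[μ] μ[μ[b.indicator (fun _ => (1 : ℝ)) * a.indicator (fun _ => (1 : ℝ)) | m' ⊔ m₂] | m'] :=
        (condExp_condExp_of_le le_sup_left (sup_le hm' hm₂)).symm
    _ =ᵐ[μ] μ[b.indicator (fun _ => (1 : ℝ)) * (μ⟦a | m' ⊔ m₂⟧) | m'] :=
        condExp_congr_ae (condExp_mul_of_stronglyMeasurable_left hb_sm
          (ha_int.indicator_one_mul hbΩ) ha_int)
    _ =ᵐ[μ] μ[b.indicator (fun _ => (1 : ℝ)) * (μ⟦a | m'⟧) | m'] :=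
        condExp_congr_ae (h a ha).mul_left
    _ =ᵐ[μ] μ⟦b | m'⟧ * μ⟦a | m'⟧ :=
        condExp_mul_of_stronglyMeasurable_right stronglyMeasurable_condExp
          (integrable_condExp.indicator_one_mul hbΩ) ((integrable_const 1).indicator hbΩ)
    _ = μ⟦a | m'⟧ * μ⟦b | m'⟧ := mul_comm _ _

-- Weak union in a general form; the usual one is the case `m₂ = m₃ ⊔ m₄`, `m'' = m' ⊔ m₄`.
theorem CondIndep.weak_union {hm' : m' ≤ mΩ} (hm₁ : m₁ ≤ mΩ) (hm₂ : m₂ ≤ mΩ)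
    (h : CondIndep m' m₁ m₂ hm' μ) (h_le : m' ≤ m'') (h_sup : m'' ⊔ m₃ ≤ m' ⊔ m₂) :
    CondIndep m'' m₁ m₃ (le_sup_left.trans (h_sup.trans (sup_le hm' hm₂))) μ := by
  have hsup : m' ⊔ m₂ ≤ mΩ := sup_le hm' hm₂
  refine condIndep_of_condExp_indicator_sup_ae_eq _ hm₁ ((le_sup_right.trans h_sup).trans hsup)
    fun t ht => ?_
  have between : ∀ m, m' ≤ m → m ≤ m' ⊔ m₂ → μ⟦t | m⟧ =ᵐ[μ] μ⟦t | m'⟧ := fun m hm'm hm =>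
    calc μ⟦t | m⟧
        =ᵐ[μ] μ[μ⟦t | m' ⊔ m₂⟧ | m] := (condExp_condExp_of_le hm hsup).symm
      _ =ᵐ[μ] μ[μ⟦t | m'⟧ | m] := condExp_congr_ae (h.condExp_indicator_sup_ae_eq hm₁ hm₂ ht)
      _ = μ⟦t | m'⟧ := condExp_of_stronglyMeasurable (hm.trans hsup)
          (stronglyMeasurable_condExp.mono hm'm) integrable_condExp
  exact (between _ (h_le.trans le_sup_left) h_sup).trans
    (between _ h_le (le_sup_left.trans h_sup)).symm

theorem CondIndep.contraction {hm' : m' ≤ mΩ} (hm₁ : m₁ ≤ mΩ) (hm₂ : m₂ ≤ mΩ) (hm₃ : m₃ ≤ mΩ)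
    (h₁ : CondIndep m' m₁ m₂ hm' μ) (h₂ : CondIndep (m' ⊔ m₁) m₃ m₂ (sup_le hm' hm₁) μ) :
    CondIndep m' (m₁ ⊔ m₃) m₂ hm' μ := by
  refine (condIndep_of_condExp_indicator_sup_ae_eq hm' hm₂ (sup_le hm₁ hm₃) fun t ht => ?_).symm
  rw [← sup_assoc]
  exact (h₂.symm.condExp_indicator_sup_ae_eq hm₂ hm₃ ht).trans
    (h₁.symm.condExp_indicator_sup_ae_eq hm₂ hm₁ ht)

theorem CondIndep.of_cond_eq {hm' : m' ≤ mΩ} (h : CondIndep m' m₁ m₂ hm' μ) (e : m' = m'') :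
    CondIndep m'' m₁ m₂ (e ▸ hm') μ := by
  subst e
  exact h

theorem condIndep_history_of_forall_condIndep {G H K F : ℕ → MeasurableSpace Ω} {n : ℕ}
    (hG : ∀ i, G i ≤ mΩ) (hH : ∀ i, H i ≤ mΩ) (hK : ∀ i, K i ≤ mΩ) (hF : ∀ i, F i ≤ mΩ)
    (hH_zero : H 0 = ⊥) (hH_succ : ∀ i, H (i + 1) ≤ H i ⊔ K i) (hG_mono : ∀ i, G i ≤ G (i + 1))
    (hGF : ∀ i, i + 1 < n → G (i + 1) ⊔ F (i + 1) ≤ G i ⊔ F i)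
    (h : ∀ i < n, CondIndep (G i ⊔ H i) (K i) (F i) (sup_le (hG i) (hH i)) μ) :
    ∀ i < n, CondIndep (G i) (H (i + 1)) (F i) (hG i) μ := by
  have step : ∀ i < n, CondIndep (G i) (H i) (F i) (hG i) μ →
      CondIndep (G i) (H (i + 1)) (F i) (hG i) μ := fun i hi hHF =>
    condIndep_of_condIndep_of_le_left (hHF.contraction (hH i) (hF i) (hK i) (h i hi)) (hH_succ i)
  have past : ∀ i < n, CondIndep (G i) (H i) (F i) (hG i) μ := by
    intro i
    induction i with
    | zero =>
      intro _
      rw [hH_zero]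
      exact condIndep_bot_left _
    | succ i ih =>
      intro hi
      exact (step i (by omega) (ih (by omega))).weak_union (hH _) (hF _) (hG_mono i) (hGF i hi)
  exact fun i hi => step i hi (past i hi)

end ProbabilityTheory

theorem stmt1_general
    {Ω : Type*} [MeasurableSpace Ω] [StandardBorelSpace Ω]
    (μ : Measure Ω) [IsProbabilityMeasure μ]
    {𝒳 𝒴 : ℕ → Type*}
    [∀ i, MeasurableSpace (𝒳 i)]
    [∀ i, MeasurableSpace (𝒴 i)]
    (n : ℕ) (X : (i : ℕ) → Ω → 𝒳 i) (Y : (i : ℕ) → Ω → 𝒴 i)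
    (hX : ∀ i, Measurable (X i)) (hY : ∀ i, Measurable (Y i))
    -- hypothesis: `Y_i ↔ (X^i, Y^{i-1}) ↔ (X_{i+1}, …, X_n)` for every `i < n`
    (hMC : ∀ i < n,
      CondIndepFun
        (MeasurableSpace.comap
          (fun ω => ((fun j : Fin i => Y j ω), (fun j : Fin (i + 1) => X j ω))) inferInstance)
        (((measurable_pi_lambda _ fun j : Fin i => hY j).prodMk
          (measurable_pi_lambda _ fun j : Fin (i + 1) => hX j)).comap_le)
        (Y i) (fun ω (j : Fin (n - i)) => X (i + 1 + j) ω) μ) :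
    -- conclusion: `Y^i ↔ X^i ↔ X_{i+1}` for every `i < n`
    ∀ i < n,
      CondIndepFun
        (MeasurableSpace.comap (fun ω (j : Fin (i + 1)) => X j ω) inferInstance)
        ((measurable_pi_lambda _ fun j : Fin (i + 1) => hX j).comap_le)
        (fun ω (j : Fin (i + 1)) => Y j ω) (X (i + 1)) μ := by
  open MeasurableSpace in
  have hpast := condIndep_history_of_forall_condIndep (μ := μ) (n := n)
    (G := fun k => pi.comap (fun ω (j : Fin (k + 1)) => X j ω))
    (H := fun k => pi.comap (fun ω (j : Fin k) => Y j ω))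
    (K := fun k => MeasurableSpace.comap (Y k) inferInstance)
    (F := fun k => pi.comap (fun ω (j : Fin (n - k)) => X (k + 1 + j) ω))
    (fun k => (measurable_pi_lambda _ fun j : Fin (k + 1) => hX j).comap_le)
    (fun k => (measurable_pi_lambda _ fun j : Fin k => hY j).comap_le)
    (fun k => (hY k).comap_le)
    (fun k => (measurable_pi_lambda _ fun j => hX _).comap_le)
    (comap_fin_zero_eq_bot Y) (comap_fin_succ_le Y) (fun k => comap_fin_le_comap_fin_succ X (k + 1))
    (fun k hk => comap_fin_succ_sup_comap_fin_shift_le X (by omega))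
    (fun k hk => ((condIndepFun_iff_condIndep _ _ _ _ μ).1 (hMC k hk)).of_cond_eq
      ((comap_prodMk _ _).trans (sup_comm _ _)))
  intro i hi
  rw [condIndepFun_iff_condIndep]
  exact condIndep_of_condIndep_of_le_right (hpast i hi) (comap_le_comap_fin_shift X (by omega))

/-- If for each `i < n` the Markov chain
`Y_i ↔ (X^i, Y^{i-1}) ↔ (X_{i+1}, …, X_n)` holds (i.e. `Y_i` is conditionally independent of
the future source symbols `(X_{i+1}, …, X_n)` given `(X^i, Y^{i-1})`), then for each `i < n`
the Markov chain `Y^i ↔ X^i ↔ X_{i+1}` holds, i.e. `Y^i = (Y_0, …, Y_i)` is conditionally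
independent of `X_{i+1}` given `X^i`. -/
theorem stmt1
    {Ω : Type*} [MeasurableSpace Ω] [StandardBorelSpace Ω] [Nonempty Ω]
    (μ : Measure Ω) [IsProbabilityMeasure μ]
    {𝒳 𝒴 : ℕ → Type*}
    [∀ i, MeasurableSpace (𝒳 i)] [∀ i, TopologicalSpace (𝒳 i)]
    [∀ i, PolishSpace (𝒳 i)] [∀ i, BorelSpace (𝒳 i)]
    [∀ i, MeasurableSpace (𝒴 i)] [∀ i, TopologicalSpace (𝒴 i)]
    [∀ i, PolishSpace (𝒴 i)] [∀ i, BorelSpace (𝒴 i)]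
    (n : ℕ) (X : (i : ℕ) → Ω → 𝒳 i) (Y : (i : ℕ) → Ω → 𝒴 i)
    (hX : ∀ i, Measurable (X i)) (hY : ∀ i, Measurable (Y i))
    -- hypothesis: `Y_i ↔ (X^i, Y^{i-1}) ↔ (X_{i+1}, …, X_n)` for every `i < n`
    (hMC : ∀ i < n,
      CondIndepFun
        (MeasurableSpace.comap
          (fun ω => ((fun j : Fin i => Y j ω), (fun j : Fin (i + 1) => X j ω))) inferInstance)
        (((measurable_pi_lambda _ fun j : Fin i => hY j).prodMk
          (measurable_pi_lambda _ fun j : Fin (i + 1) => hX j)).comap_le)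
        (Y i) (fun ω (j : Fin (n - i)) => X (i + 1 + j) ω) μ) :
    -- conclusion: `Y^i ↔ X^i ↔ X_{i+1}` for every `i < n`
    ∀ i < n,
      CondIndepFun
        (MeasurableSpace.comap (fun ω (j : Fin (i + 1)) => X j ω) inferInstance)
        ((measurable_pi_lambda _ fun j : Fin (i + 1) => hX j).comap_le)
        (fun ω (j : Fin (i + 1)) => Y j ω) (X (i + 1)) μ :=
  stmt1_general μ n X Y hX hY hMC
end

section
/- Let 0 < p < 1, 0 < q < 1, and let (X_{i-1}, X_i) be a {0,1}²-valued random pair with the stationary joint distribution P(0,0) = (1−p)q/(p+q), P(1,0) = P(0,1) = pq/(p+q), P(1,1) = p(1−q)/(p+q) (first coordinate x_i, second x_{i-1}). Define the distortion d(x_i, x_{i-1}, y) = 1 if y ≠ 1_{x_i = x_{i-1} = 1} and 0 otherwise, and set θ := p(1−q)/(p+q), D_max := min(θ, 1−θ) = min(p(1−q)/(p+q), q(1+p)/(p+q)). Then for every 0 ≤ D ≤ D_max and every {0,1}-valued random variable Y jointly distributed with (X_{i-1},X_i) (i.e., every conditional pmf P(y|x_i,x_{i-1})) satisfying E[d(X_i,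 X_{i-1}, Y)] ≤ D, the mutual information satisfies I((X_{i-1},X_i); Y) ≥ H_b(q(1+p)/(p+q)) − H_b(D). -/
/-- The stationary joint pmf of the consecutive pair `(X_i, X_{i-1})` of the binary Markov
source (first coordinate `x_i`, second `x_{i-1}`). -/
noncomputable def pairP (p q : ℝ) : Fin 2 × Fin 2 → ℝ := fun x =>
  if x = (0, 0) then (1 - p) * q / (p + q)
  else if x = (1, 1) then p * (1 - q) / (p + q)
  else p * q / (p + q)

/-- The distortion `d(x_i, x_{i-1}, y)`: the Hamming distance between `y` and the indicator
`1_{x_i = x_{i-1} = 1}`. -/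
def dH : Fin 2 × Fin 2 → Fin 2 → ℝ := fun x y =>
  if y = (if x = (1, 1) then 1 else 0) then 0 else 1

/-- The expected distortion `E[d(X_i, X_{i-1}, Y)]` of a conditional pmf `W`. -/
noncomputable def expDist (p q : ℝ) (W : Fin 2 × Fin 2 → Fin 2 → ℝ) : ℝ :=
  ∑ x, ∑ y, pairP p q x * W x y * dH x y

/-- The output pmf of `Y` induced by the conditional pmf `W`. -/
noncomputable def outP (p q : ℝ) (W : Fin 2 × Fin 2 → Fin 2 → ℝ) (y : Fin 2) : ℝ :=
  ∑ x, pairP p q x * W x y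

/-- The mutual information `I((X_{i-1}, X_i); Y)` (in bits) induced by the conditional
pmf `W`. -/
noncomputable def mutI (p q : ℝ) (W : Fin 2 × Fin 2 → Fin 2 → ℝ) : ℝ :=
  ∑ x, ∑ y, pairP p q x * W x y *
    Real.logb 2 ((pairP p q x * W x y) / (pairP p q x * outP p q W y))

/-- The binary entropy function (base 2), with `H_b 0 = H_b 1 = 0`. -/
noncomputable def binEnt (t : ℝ) : ℝ :=
  -(t * Real.logb 2 t) - (1 - t) * Real.logb 2 (1 - t)

/-!
Let `Z = f X` be the indicator of two consecutive ones, so `P(Z = 1) = θ`. For any backward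
channel `V(x | y)`, Gibbs' inequality gives `I(X; Y) ≥ E[log (V(X | Y) / P(X))]`. The choice
`V(x | y) = P(x | Z = f x) · BSC_D(f x | y)` turns the right-hand side into
`H_b(θ) + E log D + (1 - E) log (1 - D)`, where `E ≤ D` is the expected Hamming distortion
between `Y` and `Z`; for `D ≤ 1/2` this is at least `H_b(θ) - H_b(D)`.
-/

open Real Finset

lemma sub_le_mul_log_div {a b : ℝ} (ha : 0 ≤ a) (hb : 0 ≤ b) (hab : b = 0 → a = 0) :
    a - b ≤ a * log (a / b) := by
  rcases ha.eq_or_lt with rfl | ha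
  · simpa using hb
  have hb : 0 < b := hb.lt_of_ne' fun h => ha.ne' (hab h)
  calc a - b = a * (1 - (a / b)⁻¹) := by field_simp
    _ ≤ a * log (a / b) := by gcongr; exact one_sub_inv_le_log_of_pos (div_pos ha hb)

lemma sum_mul_log_div_nonneg {ι : Type*} [Fintype ι] {a b : ι → ℝ} (ha : ∀ i, 0 ≤ a i)
    (hb : ∀ i, 0 ≤ b i) (hab : ∀ i, b i = 0 → a i = 0) (hsum : ∑ i, b i ≤ ∑ i, a i) :
    0 ≤ ∑ i, a i * log (a i / b i) :=
  calc 0 ≤ ∑ i, a i - ∑ i, b i := sub_nonneg.2 hsum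
    _ = ∑ i, (a i - b i) := (sum_sub_distrib ..).symm
    _ ≤ _ := sum_le_sum fun i _ => sub_le_mul_log_div (ha i) (hb i) (hab i)

section Channel

variable {α β : Type*} [Fintype α] (P : α → ℝ) (W : α → β → ℝ)

noncomputable def channelOutput (y : β) : ℝ := ∑ x, P x * W x y

noncomputable def channelMutualInfo [Fintype β] : ℝ :=
  ∑ x, ∑ y, P x * W x y * log (P x * W x y / (P x * channelOutput P W y))

variable {P W}

lemma channelOutput_nonneg (hP : ∀ x, 0 ≤ P x) (hW : ∀ x y, 0 ≤ W x y) (y : β) :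
    0 ≤ channelOutput P W y :=
  sum_nonneg fun x _ => mul_nonneg (hP x) (hW x y)

lemma mul_le_channelOutput (hP : ∀ x, 0 ≤ P x) (hW : ∀ x y, 0 ≤ W x y) (x : α) (y : β) :
    P x * W x y ≤ channelOutput P W y :=
  single_le_sum (f := fun x => P x * W x y) (fun x _ => mul_nonneg (hP x) (hW x y)) (mem_univ x)

variable [Fintype β]

/-- Variational lower bound: `V x y` plays the role of a backward channel `P(x | y)`. -/
theorem sum_mul_log_div_le_channelMutualInfo (hP : ∀ x, 0 ≤ P x) (hW : ∀ x y, 0 ≤ W x y)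
    {V : α → β → ℝ} (hV : ∀ x y, 0 ≤ V x y) (hV1 : ∀ y, ∑ x, V x y ≤ 1)
    (hVW : ∀ x y, V x y = 0 → P x * W x y = 0) :
    ∑ x, ∑ y, P x * W x y * log (V x y / P x) ≤ channelMutualInfo P W := by
  have hPW x y : 0 ≤ P x * W x y := mul_nonneg (hP x) (hW x y)
  have hdiff x y : P x * W x y * log (P x * W x y / (P x * channelOutput P W y)) -
      P x * W x y * log (V x y / P x) =
      P x * W x y * log (P x * W x y / (channelOutput P W y * V x y)) := by
    rcases (hPW x y).eq_or_lt with h | h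
    · simp [← h]
    have hPx : P x ≠ 0 := left_ne_zero_of_mul h.ne'
    have hQ : 0 < channelOutput P W y := h.trans_le (mul_le_channelOutput hP hW x y)
    have hVxy : V x y ≠ 0 := fun hV => h.ne' (hVW x y hV)
    rw [← mul_sub, ← log_div (by positivity) (by positivity)]
    congr 2
    field_simp
  rw [← sub_nonneg, channelMutualInfo, ← sum_sub_distrib]
  simp_rw [← sum_sub_distrib, hdiff]
  rw [sum_comm]
  refine sum_nonneg fun y _ => sum_mul_log_div_nonneg (fun x => hPW x y)
    (fun x => mul_nonneg (channelOutput_nonneg hP hW y) (hV x y)) (fun x h => ?_) ?_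
  · rcases mul_eq_zero.1 h with h | h
    · exact le_antisymm (h ▸ mul_le_channelOutput hP hW x y) (hPW x y)
    · exact hVW x y h
  · rw [← mul_sum]
    exact mul_le_of_le_one_right (channelOutput_nonneg hP hW y) (hV1 y)

end Channel

section HammingConverse

variable {α γ : Type*} [Fintype α] [DecidableEq γ]

noncomputable def marginal (P : α → ℝ) (f : α → γ) (z : γ) : ℝ :=
  ∑ x with f x = z, P x

lemma sum_comp_marginal [Fintype γ] (P : α → ℝ) (f : α → γ) (g : γ → ℝ) :
    ∑ x, P x * g (f x) = ∑ z, marginal P f z * g z := by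
  rw [← sum_fiberwise univ f]
  refine sum_congr rfl fun z _ => ?_
  rw [marginal, sum_mul]
  exact sum_congr rfl fun x hx => by rw [(mem_filter.1 hx).2]

lemma le_marginal {P : α → ℝ} (hP : ∀ x, 0 ≤ P x) (f : α → γ) (x : α) :
    P x ≤ marginal P f (f x) :=
  single_le_sum (fun x _ => hP x) (mem_filter.2 ⟨mem_univ x, rfl⟩)

def bsc (D : ℝ) (z y : Fin 2) : ℝ := if y = z then 1 - D else D

lemma bsc_nonneg {D : ℝ} (hD0 : 0 ≤ D) (hD1 : D ≤ 1) (z y : Fin 2) : 0 ≤ bsc D z y := by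
  unfold bsc; split_ifs <;> linarith

lemma sum_bsc (D : ℝ) (y : Fin 2) : ∑ z, bsc D z y = 1 := by
  fin_cases y <;> simp [bsc, Fin.sum_univ_two]

variable (P : α → ℝ) (f : α → Fin 2) (W : α → Fin 2 → ℝ)

noncomputable def hammingDistortion : ℝ :=
  ∑ x, ∑ y, P x * W x y * if y = f x then 0 else 1

/-- The backward test channel `P(x | y)`: `f X` is `y` passed through `bsc D`, and `X` is then
drawn from `P` conditioned on `f X`. -/
noncomputable def backwardChannel (D : ℝ) (x : α) (y : Fin 2) : ℝ :=
  P x / marginal P f (f x) * bsc D (f x) y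

variable {P f W}

lemma hammingDistortion_nonneg (hP : ∀ x, 0 ≤ P x) (hW : ∀ x y, 0 ≤ W x y) :
    0 ≤ hammingDistortion P f W :=
  sum_nonneg fun x _ => sum_nonneg fun y _ =>
    mul_nonneg (mul_nonneg (hP x) (hW x y)) (by split_ifs <;> norm_num)

lemma mul_le_hammingDistortion (hP : ∀ x, 0 ≤ P x) (hW : ∀ x y, 0 ≤ W x y) {x : α} {y : Fin 2}
    (hy : y ≠ f x) : P x * W x y ≤ hammingDistortion P f W := by
  have hterm x' y' : 0 ≤ P x' * W x' y' * if y' = f x' then 0 else 1 :=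
    mul_nonneg (mul_nonneg (hP x') (hW x' y')) (by split_ifs <;> norm_num)
  calc P x * W x y = P x * W x y * if y = f x then 0 else 1 := by simp [hy]
    _ ≤ ∑ y', P x * W x y' * if y' = f x then 0 else 1 :=
      single_le_sum (f := fun y' => P x * W x y' * if y' = f x then 0 else 1)
        (fun y' _ => hterm x y') (mem_univ y)
    _ ≤ hammingDistortion P f W :=
      single_le_sum (f := fun x' => ∑ y', P x' * W x' y' * if y' = f x' then 0 else 1)
        (fun x' _ => sum_nonneg fun y' _ => hterm x' y') (mem_univ x)

lemma bsc_ne_zero_of_mul_ne_zero (hP : ∀ x, 0 ≤ P x) (hW : ∀ x y, 0 ≤ W x y) {D : ℝ}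
    (hD1 : D < 1) (hdist : hammingDistortion P f W ≤ D) {x : α} {y : Fin 2}
    (hxy : P x * W x y ≠ 0) : bsc D (f x) y ≠ 0 := by
  unfold bsc
  split_ifs with hy
  · linarith
  · rintro rfl
    exact hxy (le_antisymm (mul_le_hammingDistortion hP hW hy |>.trans hdist)
      (mul_nonneg (hP x) (hW x y)))

lemma sum_backwardChannel_le_one {D : ℝ} (hD0 : 0 ≤ D) (hD1 : D ≤ 1)
    (y : Fin 2) : ∑ x, backwardChannel P f D x y ≤ 1 :=
  calc ∑ x, backwardChannel P f D x y = ∑ z, marginal P f z * (bsc D z y / marginal P f z) := by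
        simp_rw [backwardChannel, div_mul_eq_mul_div, mul_div_assoc]
        exact sum_comp_marginal P f fun z => bsc D z y / marginal P f z
    _ = ∑ z, marginal P f z / marginal P f z * bsc D z y :=
        sum_congr rfl fun z _ => by ring
    _ ≤ ∑ z, bsc D z y :=
        sum_le_sum fun z _ => mul_le_of_le_one_left (bsc_nonneg hD0 hD1 z y) (div_self_le_one _)
    _ = 1 := sum_bsc D y

lemma sum_mul_log_backwardChannel_div (hP : ∀ x, 0 ≤ P x) (hP1 : ∑ x, P x = 1)
    (hW : ∀ x y, 0 ≤ W x y) (hW1 : ∀ x, ∑ y, W x y = 1) {D : ℝ} (hD1 : D < 1)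
    (hdist : hammingDistortion P f W ≤ D) :
    ∑ x, ∑ y, P x * W x y * log (backwardChannel P f D x y / P x) =
      binEntropy (marginal P f 1) + hammingDistortion P f W * log D +
        (1 - hammingDistortion P f W) * log (1 - D) := by
  have hterm x y : P x * W x y * log (backwardChannel P f D x y / P x) =
      P x * W x y * (if y = f x then 0 else 1) * (log D - log (1 - D)) +
        P x * W x y * log (1 - D) - P x * W x y * log (marginal P f (f x)) := by
    rcases eq_or_ne (P x * W x y) 0 with h | h
    · simp [h]
    have hPx : 0 < P x := (hP x).lt_of_ne' (left_ne_zero_of_mul h)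
    have hM : 0 < marginal P f (f x) := hPx.trans_le (le_marginal hP f x)
    have hV : backwardChannel P f D x y / P x = bsc D (f x) y / marginal P f (f x) := by
      rw [backwardChannel]
      field_simp
    rw [hV, log_div (bsc_ne_zero_of_mul_ne_zero hP hW hD1 hdist h) hM.ne', bsc]
    split_ifs <;> ring
  have hjoint : ∑ x, ∑ y, P x * W x y = 1 := by simp_rw [← mul_sum, hW1, mul_one, hP1]
  have hentropy : ∑ x, ∑ y, P x * W x y * log (marginal P f (f x)) =
      -binEntropy (marginal P f 1) := by
    have hM : marginal P f 0 + marginal P f 1 = 1 := by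
      rw [← Fin.sum_univ_two (marginal P f), ← hP1]
      exact sum_fiberwise univ f P
    simp_rw [← sum_mul, ← mul_sum, hW1, mul_one]
    rw [sum_comp_marginal P f fun z => log (marginal P f z), Fin.sum_univ_two,
      binEntropy_eq_negMulLog_add_negMulLog_one_sub, negMulLog, negMulLog, ← hM]
    ring_nf
  simp only [hterm, sum_sub_distrib, sum_add_distrib]
  rw [hentropy]
  simp only [← sum_mul, hjoint]
  rw [hammingDistortion]
  ring

lemma neg_binEntropy_le_mul_log_add_mul_log_one_sub {D E : ℝ} (hED : E ≤ D) (hD : D ≤ 1 / 2) :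
    -binEntropy D ≤ E * log D + (1 - E) * log (1 - D) := by
  have hlog : log D ≤ log (1 - D) := by
    rcases eq_or_ne D 0 with rfl | hD0
    · simp
    rw [← log_abs]
    exact log_le_log (abs_pos.2 hD0) (abs_le.2 ⟨by linarith, by linarith⟩)
  rw [binEntropy_eq_negMulLog_add_negMulLog_one_sub, negMulLog, negMulLog]
  nlinarith [mul_le_mul_of_nonneg_left hlog (sub_nonneg.2 hED)]

theorem binEntropy_sub_binEntropy_le_channelMutualInfo (hP : ∀ x, 0 ≤ P x)
    (hP1 : ∑ x, P x = 1) (hW : ∀ x y, 0 ≤ W x y) (hW1 : ∀ x, ∑ y, W x y = 1) {D : ℝ}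
    (hD : D ≤ 1 / 2) (hdist : hammingDistortion P f W ≤ D) :
    binEntropy (marginal P f 1) - binEntropy D ≤ channelMutualInfo P W := by
  have hD0 : 0 ≤ D := (hammingDistortion_nonneg hP hW).trans hdist
  have hD1 : D < 1 := by linarith
  have hV x y : 0 ≤ backwardChannel P f D x y :=
    mul_nonneg (div_nonneg (hP x) ((hP x).trans (le_marginal hP f x))) (bsc_nonneg hD0 hD1.le _ _)
  have hVW x y (hVxy : backwardChannel P f D x y = 0) : P x * W x y = 0 := by
    by_contra h
    have hPx : 0 < P x := (hP x).lt_of_ne' (left_ne_zero_of_mul h)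
    exact mul_ne_zero (div_pos hPx (hPx.trans_le (le_marginal hP f x))).ne'
      (bsc_ne_zero_of_mul_ne_zero hP hW hD1 hdist h) hVxy
  calc binEntropy (marginal P f 1) - binEntropy D
      ≤ binEntropy (marginal P f 1) + hammingDistortion P f W * log D +
          (1 - hammingDistortion P f W) * log (1 - D) := by
        linarith [neg_binEntropy_le_mul_log_add_mul_log_one_sub hdist hD]
    _ = ∑ x, ∑ y, P x * W x y * log (backwardChannel P f D x y / P x) :=
        (sum_mul_log_backwardChannel_div hP hP1 hW hW1 hD1 hdist).symm
    _ ≤ channelMutualInfo P W :=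
        sum_mul_log_div_le_channelMutualInfo hP hW hV (sum_backwardChannel_le_one hD0 hD1.le) hVW

end HammingConverse

lemma pairP_nonneg {p q : ℝ} (hp0 : 0 ≤ p) (hp1 : p ≤ 1) (hq0 : 0 ≤ q) (hq1 : q ≤ 1)
    (x : Fin 2 × Fin 2) : 0 ≤ pairP p q x := by
  have hs : 0 ≤ p + q := by linarith
  unfold pairP
  split_ifs
  · exact div_nonneg (mul_nonneg (by linarith) hq0) hs
  · exact div_nonneg (mul_nonneg hp0 (by linarith)) hs
  · exact div_nonneg (mul_nonneg hp0 hq0) hs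

lemma sum_pairP {p q : ℝ} (hs : p + q ≠ 0) : ∑ x, pairP p q x = 1 := by
  simp only [Fintype.sum_prod_type, Fin.sum_univ_two, pairP]
  norm_num
  field_simp
  ring

def bothOnes (x : Fin 2 × Fin 2) : Fin 2 := if x = (1, 1) then 1 else 0

lemma marginal_pairP_bothOnes_one (p q : ℝ) :
    marginal (pairP p q) bothOnes 1 = p * (1 - q) / (p + q) := by
  simp [marginal, bothOnes, sum_filter, pairP]

lemma binEnt_eq_binEntropy_div_log_two (t : ℝ) : binEnt t = binEntropy t / log 2 := by
  rw [binEnt, binEntropy, logb, logb, log_inv, log_inv]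
  ring

lemma mutI_eq_channelMutualInfo_div_log_two (p q : ℝ) (W : Fin 2 × Fin 2 → Fin 2 → ℝ) :
    mutI p q W = channelMutualInfo (pairP p q) W / log 2 := by
  simp only [mutI, channelMutualInfo, logb, sum_div, mul_div_assoc]
  rfl

theorem stmt12_general (p q : ℝ) (hp0 : 0 < p) (hp1 : p < 1) (hq0 : 0 < q) (hq1 : q < 1)
    (W : Fin 2 × Fin 2 → Fin 2 → ℝ)
    (hW0 : ∀ x y, 0 ≤ W x y) (hW1 : ∀ x, ∑ y, W x y = 1)
    (D : ℝ)
    (hDmax : D ≤ min (p * (1 - q) / (p + q)) (q * (1 + p) / (p + q)))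
    (hdist : expDist p q W ≤ D) :
    binEnt (q * (1 + p) / (p + q)) - binEnt D ≤ mutI p q W := by
  have hs : p + q ≠ 0 := by positivity
  have hcompl : q * (1 + p) / (p + q) = 1 - p * (1 - q) / (p + q) := by
    field_simp
    ring
  have hD : D ≤ 1 / 2 := by
    rw [hcompl] at hDmax
    rcases le_total (p * (1 - q) / (p + q)) (1 / 2) with h | h
    · exact hDmax.trans ((min_le_left _ _).trans h)
    · exact hDmax.trans ((min_le_right _ _).trans (by linarith))
  have key := binEntropy_sub_binEntropy_le_channelMutualInfo (f := bothOnes)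
    (pairP_nonneg hp0.le hp1.le hq0.le hq1.le) (sum_pairP hs) hW0 hW1 hD hdist
  rw [marginal_pairP_bothOnes_one] at key
  rw [hcompl, binEnt_eq_binEntropy_div_log_two, binEnt_eq_binEntropy_div_log_two,
    binEntropy_one_sub, ← sub_div, mutI_eq_channelMutualInfo_div_log_two]
  exact div_le_div_of_nonneg_right key (log_pos one_lt_two).le

/-- (Converse part.) For the stationary binary Markov pair source with
Hamming-type distortion toward the indicator of two consecutive ones, every conditional pmf
`W` with expected distortion at most `D ≤ D_max` has mutual information at least
`H_b(q(1+p)/(p+q)) − H_b(D)`. -/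
theorem stmt12 (p q : ℝ) (hp0 : 0 < p) (hp1 : p < 1) (hq0 : 0 < q) (hq1 : q < 1)
    (W : Fin 2 × Fin 2 → Fin 2 → ℝ)
    (hW0 : ∀ x y, 0 ≤ W x y) (hW1 : ∀ x, ∑ y, W x y = 1)
    (D : ℝ) (hD0 : 0 ≤ D)
    (hDmax : D ≤ min (p * (1 - q) / (p + q)) (q * (1 + p) / (p + q)))
    (hdist : expDist p q W ≤ D) :
    binEnt (q * (1 + p) / (p + q)) - binEnt D ≤ mutI p q W :=
  stmt12_general p q hp0 hp1 hq0 hq1 W hW0 hW1 D hDmax hdist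
end
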